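/- arXiv:2502.05348 — 11 statements merged into one kernel-verified Lean document; each statement's English description precedes it below -/
import Mathlib

section
/- Let G be a simple graph on a finite vertex type V, let C ⊆ V, and let k, t ∈ ℕ. Let m : V → ℕ be defined by m v = 1 if v ∈ C and m v = k + 1 if v ∉ C, and let G' = G[m] be the blow-up. Then there exists a set B ⊆ C with |B| ≤ k such that every clique of G of size at least t intersects B, if and only if there exists a set B' of vertices of G' with |B'| ≤ k such that every clique of G' of size at least t intersects B'. -/
open Classical in
/-- The blow-up `G[m]` of a simple graph `G` along `m : V → ℕ`: the vertex type is
`Σ v : V, Fin (m v)`, and `⟨u, i⟩` is adjacent to `⟨v, j⟩` iff `u` and `v` are adjacent in `G`. -/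
def SimpleGraph.blowup {V : Type*} (G : SimpleGraph V) (m : V → ℕ) :
    SimpleGraph (Σ v : V, Fin (m v)) where
  Adj a b := G.Adj a.1 b.1
  symm := ⟨fun _ _ h => G.adj_symm h⟩
  loopless := ⟨fun _ h => G.irrefl h⟩

/-!
A `t`-clique of `G[m]` has at most one vertex in each fiber, so it projects bijectively onto a
`t`-clique of `G`; conversely a `t`-clique of `G` lifts to `G[m]` through any choice of one
vertex per fiber. Hence the fibers over a transversal `B` of `G` form a transversal of `G[m]`,
of the same size when the fibers over `B ⊆ C` are singletons; and for a transversal `B'` of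
`G[m]`, the vertices whose whole fiber lies in `B'` form a transversal of `G` (otherwise lift a
clique avoiding them through vertices outside `B'`). Such a vertex has `m v ≤ |B'| ≤ k`, so it
lies in `C`.
-/

namespace SimpleGraph

variable {V : Type*}

def IsCliqueTransversal (G : SimpleGraph V) (t : ℕ) (B : Set V) : Prop :=
  ∀ K : Set V, G.IsClique K → t ≤ K.ncard → (K ∩ B).Nonempty

variable {G : SimpleGraph V} {m : V → ℕ} {t : ℕ}

theorem isClique_blowup_iff {K' : Set (Σ v : V, Fin (m v))} :
    (G.blowup m).IsClique K' ↔ K'.InjOn Sigma.fst ∧ G.IsClique (Sigma.fst '' K') := by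
  constructor
  · intro hK'
    refine ⟨fun a ha b hb hab => ?_, ?_⟩
    · by_contra hne
      have hadj : G.Adj a.1 b.1 := hK' ha hb hne
      exact G.irrefl (hab ▸ hadj)
    · rintro _ ⟨a, ha, rfl⟩ _ ⟨b, hb, rfl⟩ hne
      exact hK' ha hb fun h => hne (congrArg Sigma.fst h)
  · rintro ⟨hinj, hK⟩ a ha b hb hne
    exact hK ⟨a, ha, rfl⟩ ⟨b, hb, rfl⟩ fun h => hne (hinj ha hb h)

theorem IsCliqueTransversal.preimage_fst_blowup {B : Set V} (hB : G.IsCliqueTransversal t B) :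
    (G.blowup m).IsCliqueTransversal t (Sigma.fst ⁻¹' B) := by
  intro K' hK' htK'
  obtain ⟨hinj, hK⟩ := isClique_blowup_iff.mp hK'
  obtain ⟨_, ⟨a, haK', rfl⟩, haB⟩ := hB _ hK (by rwa [hinj.ncard_image])
  exact ⟨a, haK', haB⟩

theorem IsCliqueTransversal.of_blowup {B' : Set (Σ v : V, Fin (m v))}
    (hB' : (G.blowup m).IsCliqueTransversal t B') :
    G.IsCliqueTransversal t {v | ∀ i, (⟨v, i⟩ : Σ v : V, Fin (m v)) ∈ B'} := by
  intro K hK htK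
  by_contra hKB
  have hfree : ∀ v ∈ K, ∃ i, (⟨v, i⟩ : Σ v : V, Fin (m v)) ∉ B' := fun v hv => by
    by_contra! hfull
    exact hKB ⟨v, hv, hfull⟩
  choose f hf using hfree
  let lift : K → Σ v : V, Fin (m v) := fun v => ⟨v, f v v.2⟩
  have hlift_inj : Function.Injective lift := fun u v h => Subtype.ext (congrArg Sigma.fst h)
  have hfst_lift : Sigma.fst '' Set.range lift = K := by
    rw [← Set.range_comp]
    exact Subtype.range_coe
  have hclique : (G.blowup m).IsClique (Set.range lift) := by
    refine isClique_blowup_iff.mpr ⟨?_, by rwa [hfst_lift]⟩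
    rintro _ ⟨u, rfl⟩ _ ⟨v, rfl⟩ h
    rw [show u = v from Subtype.ext h]
  have hcard : t ≤ (Set.range lift).ncard := by
    rwa [Set.ncard_range_of_injective hlift_inj, Nat.card_coe_set_eq]
  obtain ⟨_, ⟨v, rfl⟩, hvB'⟩ := hB' _ hclique hcard
  exact hf v v.2 hvB'

theorem ncard_preimage_fst_le [Finite V] {B : Set V} (hB : ∀ v ∈ B, m v ≤ 1) :
    (Sigma.fst ⁻¹' B : Set (Σ v : V, Fin (m v))).ncard ≤ B.ncard := by
  refine Set.ncard_le_ncard_of_injOn Sigma.fst (fun _ ha => ha) ?_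
  rintro ⟨u, i⟩ hu ⟨v, j⟩ - (rfl : u = v)
  have : Subsingleton (Fin (m u)) := Fin.subsingleton_iff_le_one.mpr (hB u hu)
  rw [Subsingleton.elim i j]

theorem le_ncard_of_fiber_subset [Finite V] {B' : Set (Σ v : V, Fin (m v))} {v : V}
    (hv : ∀ i, (⟨v, i⟩ : Σ v : V, Fin (m v)) ∈ B') : m v ≤ B'.ncard := by
  calc m v = (Set.univ : Set (Fin (m v))).ncard := by simp
    _ ≤ B'.ncard :=
      Set.ncard_le_ncard_of_injOn (Sigma.mk (β := fun v => Fin (m v)) v) (fun i _ => hv i)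
        sigma_mk_injective.injOn

theorem ncard_fiber_subset_le [Finite V] (hm : ∀ v, 0 < m v) (B' : Set (Σ v : V, Fin (m v))) :
    {v | ∀ i, (⟨v, i⟩ : Σ v : V, Fin (m v)) ∈ B'}.ncard ≤ B'.ncard :=
  Set.ncard_le_ncard_of_injOn (fun v => ⟨v, ⟨0, hm v⟩⟩) (fun v hv => hv _)
    fun _ _ _ _ h => congrArg Sigma.fst h

end SimpleGraph

open SimpleGraph

open Classical in
theorem clique_interdiction_blowup {V : Type*} [Fintype V] (G : SimpleGraph V)
    (C : Set V) (k t : ℕ) (m : V → ℕ) (hm : ∀ v : V, m v = if v ∈ C then 1 else k + 1) :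
    (∃ B : Set V, B ⊆ C ∧ B.ncard ≤ k ∧
        ∀ K : Set V, G.IsClique K → t ≤ K.ncard → (K ∩ B).Nonempty) ↔
      (∃ B' : Set (Σ v : V, Fin (m v)), B'.ncard ≤ k ∧
        ∀ K' : Set (Σ v : V, Fin (m v)),
          (G.blowup m).IsClique K' → t ≤ K'.ncard → (K' ∩ B').Nonempty) := by
  have hpos : ∀ v, 0 < m v := fun v => by rw [hm]; split_ifs <;> omega
  constructor
  · rintro ⟨B, hBC, hBk, hB⟩
    have hsingleton : ∀ v ∈ B, m v ≤ 1 := fun v hv => by simp [hm, hBC hv]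
    exact ⟨_, (ncard_preimage_fst_le hsingleton).trans hBk,
      IsCliqueTransversal.preimage_fst_blowup hB⟩
  · rintro ⟨B', hB'k, hB'⟩
    refine ⟨_, fun v hv => ?_, (ncard_fiber_subset_le hpos B').trans hB'k,
      IsCliqueTransversal.of_blowup hB'⟩
    by_contra hvC
    have hmv := le_ncard_of_fiber_subset hv
    rw [hm, if_neg hvC] at hmv
    omega
end

section
/- Let G be a simple graph on a finite vertex type V, let C ⊆ V, and let k, t ∈ ℕ. Let m : V → ℕ be defined by m v = 1 if v ∈ C and m v = k + 1 if v ∉ C, and let G' = G⟨m⟩ be the fiber-clique blow-up. Then there exists a set B ⊆ C with |B| ≤ k such that every independent set of G of size at least t intersects B, if and only if there exists a set B' of vertices of G' with |B'| ≤ k such that every independent set of G' of size at least t intersects B'. -/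
/-!
An independent set of `G⟨m⟩` meets each fiber at most once, so `Sigma.fst` carries it
bijectively onto an independent set of `G`; conversely any section `v ↦ ⟨v, s v⟩` carries
independent sets of `G` bijectively onto independent sets of `G⟨m⟩`. Hence blockers pull back
along both maps. Pulling `B ⊆ C` back along `Sigma.fst` costs nothing, since the fibers over `C`
are singletons. A blocker `B'` with `|B'| ≤ k` cannot contain a whole fiber of size `k + 1`, so
some section avoids `B'` outside `C`, and the pull-back of `B'` along it lies in `C`.
-/

/-- The fiber-clique blow-up `G⟨m⟩` of a simple graph `G` along `m : V → ℕ`: the vertex type is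
`Σ v : V, Fin (m v)`, and two distinct vertices `⟨u, i⟩` and `⟨v, j⟩` are adjacent iff `u = v`
or `u` and `v` are adjacent in `G`. -/
def SimpleGraph.fiberCliqueBlowup {V : Type*} (G : SimpleGraph V) (m : V → ℕ) :
    SimpleGraph (Σ v : V, Fin (m v)) where
  Adj a b := a ≠ b ∧ (a.1 = b.1 ∨ G.Adj a.1 b.1)
  symm := by
    constructor
    rintro a b ⟨hne, h⟩
    exact ⟨hne.symm, by cases h with
      | inl h => exact Or.inl h.symm
      | inr h => exact Or.inr (G.adj_symm h)⟩
  loopless := by constructor; rintro a ⟨hne, -⟩; exact hne rfl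

/-- A set of vertices is an independent set if its elements are pairwise non-adjacent. -/
def SimpleGraph.IsIndepSet' {V : Type*} (G : SimpleGraph V) (s : Set V) : Prop :=
  s.Pairwise fun a b => ¬ G.Adj a b

namespace SimpleGraph

variable {V W : Type*}

def IsIndepSetBlocker (G : SimpleGraph V) (t : ℕ) (B : Set V) : Prop :=
  ∀ S : Set V, G.IsIndepSet' S → t ≤ S.ncard → (S ∩ B).Nonempty

theorem IsIndepSetBlocker.preimage {G : SimpleGraph V} {H : SimpleGraph W} {t : ℕ} {B : Set W}
    (hB : H.IsIndepSetBlocker t B) (f : V → W)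
    (hf : ∀ S, G.IsIndepSet' S → S.InjOn f ∧ H.IsIndepSet' (f '' S)) :
    G.IsIndepSetBlocker t (f ⁻¹' B) := by
  intro S hS htS
  obtain ⟨hinj, hindep⟩ := hf S hS
  obtain ⟨_, ⟨x, hxS, rfl⟩, hxB⟩ := hB (f '' S) hindep (hinj.ncard_image ▸ htS)
  exact ⟨x, hxS, hxB⟩

variable {G : SimpleGraph V} {m : V → ℕ}

theorem IsIndepSet'.injOn_fst {S : Set (Σ v : V, Fin (m v))}
    (hS : (G.fiberCliqueBlowup m).IsIndepSet' S) : S.InjOn Sigma.fst := fun _ ha _ hb h =>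
  by_contra fun hne => hS ha hb hne ⟨hne, Or.inl h⟩

theorem IsIndepSet'.image_fst {S : Set (Σ v : V, Fin (m v))}
    (hS : (G.fiberCliqueBlowup m).IsIndepSet' S) : G.IsIndepSet' (Sigma.fst '' S) := by
  rintro _ ⟨a, ha, rfl⟩ _ ⟨b, hb, rfl⟩ hne hadj
  have hab : a ≠ b := fun h => hne (congrArg Sigma.fst h)
  exact hS ha hb hab ⟨hab, .inr hadj⟩

theorem IsIndepSet'.image_section {S : Set V} (hS : G.IsIndepSet' S) (s : ∀ v, Fin (m v)) :
    (G.fiberCliqueBlowup m).IsIndepSet' ((fun v => (⟨v, s v⟩ : Σ v, Fin (m v))) '' S) := by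
  rintro _ ⟨u, hu, rfl⟩ _ ⟨v, hv, rfl⟩ hne ⟨-, huv | huv⟩
  · exact hne (congrArg (fun v => (⟨v, s v⟩ : Σ v, Fin (m v))) huv)
  · exact hS hu hv (fun h => hne (by rw [h])) huv

theorem IsIndepSetBlocker.preimage_fst {t : ℕ} {B : Set V} (hB : G.IsIndepSetBlocker t B) :
    (G.fiberCliqueBlowup m).IsIndepSetBlocker t (Sigma.fst ⁻¹' B) :=
  hB.preimage Sigma.fst fun _ hS => ⟨hS.injOn_fst, hS.image_fst⟩

theorem IsIndepSetBlocker.preimage_section {t : ℕ} {B' : Set (Σ v : V, Fin (m v))}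
    (hB' : (G.fiberCliqueBlowup m).IsIndepSetBlocker t B') (s : ∀ v, Fin (m v)) :
    G.IsIndepSetBlocker t ((fun v => (⟨v, s v⟩ : Σ v, Fin (m v))) ⁻¹' B') :=
  hB'.preimage _ fun _ hS =>
    ⟨fun _ _ _ _ h => congrArg Sigma.fst h, hS.image_section s⟩

end SimpleGraph

namespace Sigma

variable {V : Type*} {m : V → ℕ}

theorem ncard_preimage_fst_le {B : Set V} (hm : ∀ v ∈ B, m v ≤ 1)
    (hB : B.Finite := by toFinite_tac) :
    (Sigma.fst ⁻¹' B : Set (Σ v, Fin (m v))).ncard ≤ B.ncard := by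
  refine Set.ncard_le_ncard_of_injOn Sigma.fst (fun _ h => h) ?_ hB
  rintro ⟨u, i⟩ hu ⟨v, j⟩ - (rfl : u = v)
  have := hm u hu
  congr 1
  omega

theorem exists_mk_notMem_of_ncard_lt {B : Set (Σ v, Fin (m v))} {v : V}
    (h : B.ncard < m v) (hB : B.Finite := by toFinite_tac) :
    ∃ i, (⟨v, i⟩ : Σ v, Fin (m v)) ∉ B := by
  by_contra! hall
  have : (Set.univ : Set (Fin (m v))).ncard ≤ B.ncard :=
    Set.ncard_le_ncard_of_injOn (fun i => (⟨v, i⟩ : Σ v, Fin (m v))) (fun i _ => hall i)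
      (fun _ _ _ _ h => by simpa using h) hB
  simp only [Set.ncard_univ, Nat.card_eq_fintype_card, Fintype.card_fin] at this
  omega

end Sigma

open Classical in
theorem indepSet_interdiction_fiberCliqueBlowup {V : Type*} [Fintype V] (G : SimpleGraph V)
    (C : Set V) (k t : ℕ) (m : V → ℕ) (hm : ∀ v : V, m v = if v ∈ C then 1 else k + 1) :
    (∃ B : Set V, B ⊆ C ∧ B.ncard ≤ k ∧
        ∀ S : Set V, G.IsIndepSet' S → t ≤ S.ncard → (S ∩ B).Nonempty) ↔
      (∃ B' : Set (Σ v : V, Fin (m v)), B'.ncard ≤ k ∧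
        ∀ S' : Set (Σ v : V, Fin (m v)),
          (G.fiberCliqueBlowup m).IsIndepSet' S' → t ≤ S'.ncard → (S' ∩ B').Nonempty) := by
  constructor
  · rintro ⟨B, hBC, hBk, hB⟩
    have hfst : (Sigma.fst ⁻¹' B : Set (Σ v, Fin (m v))).ncard ≤ B.ncard :=
      Sigma.ncard_preimage_fst_le fun v hv => by simp [hm, hBC hv]
    exact ⟨_, hfst.trans hBk, SimpleGraph.IsIndepSetBlocker.preimage_fst hB⟩
  · rintro ⟨B', hBk, hB'⟩
    have hsection :
        ∀ v, ∃ i : Fin (m v), v ∉ C → (⟨v, i⟩ : Σ v, Fin (m v)) ∉ B' := by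
      intro v
      by_cases hv : v ∈ C
      · exact ⟨⟨0, by simp [hm, hv]⟩, absurd hv⟩
      · obtain ⟨i, hi⟩ := Sigma.exists_mk_notMem_of_ncard_lt (B := B') (v := v)
          (by rw [hm, if_neg hv]; omega)
        exact ⟨i, fun _ => hi⟩
    choose s hs using hsection
    refine ⟨_, fun v hv => by_contra (hs v · hv), ?_,
      SimpleGraph.IsIndepSetBlocker.preimage_section hB' s⟩
    exact (Set.ncard_le_ncard_of_injOn (fun v => (⟨v, s v⟩ : Σ v, Fin (m v)))
      (fun _ h => h) (fun _ _ _ _ h => congrArg Sigma.fst h)).trans hBk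
end

section
/- Let C and D be finite types, let k, t ∈ ℕ, and let Y₁, …, Y_m be subsets of the ground set U = C ⊕ D. Define the new ground set U' = C ⊕ (D × Fin (k+1)) and, for each j, the set Y'_j = {inl c : inl c ∈ Y_j} ∪ {inr (d, i) : inr d ∈ Y_j, i ∈ Fin (k+1)}. Then there exists a set B ⊆ {inl c : c ∈ C} with |B| ≤ k such that every hitting set of (Y₁, …, Y_m) of size at most t intersects B, if and only if there exists a set B' ⊆ U' with |B'| ≤ k such that every hitting set of (Y'₁, …, Y'_m) of size at most t intersects B'. -/
/-- The projection from the duplicated ground set `C ⊕ (D × Fin (k+1))` back to `C ⊕ D`. -/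
def dupProj {C D : Type*} {k : ℕ} : C ⊕ (D × Fin (k + 1)) → C ⊕ D
  | Sum.inl c => Sum.inl c
  | Sum.inr (d, _) => Sum.inr d

theorem hittingSet_interdiction_duplication {C D : Type*} [Fintype C] [Fintype D]
    (k t M : ℕ) (Y : Fin M → Set (C ⊕ D)) :
    (∃ B : Set (C ⊕ D), B ⊆ Set.range (Sum.inl : C → C ⊕ D) ∧ B.ncard ≤ k ∧
        ∀ H : Set (C ⊕ D), (∀ j : Fin M, (H ∩ Y j).Nonempty) → H.ncard ≤ t →
          (H ∩ B).Nonempty) ↔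
      (∃ B' : Set (C ⊕ (D × Fin (k + 1))), B'.ncard ≤ k ∧
        ∀ H' : Set (C ⊕ (D × Fin (k + 1))),
          (∀ j : Fin M, (H' ∩ dupProj ⁻¹' (Y j)).Nonempty) → H'.ncard ≤ t →
            (H' ∩ B').Nonempty) := by
  classical
  constructor
  · rintro ⟨B, hBsub, hBk, hB⟩
    refine ⟨dupProj ⁻¹' B, ?_, ?_⟩
    · have hEq : dupProj (k := k) ⁻¹' B = Sum.inl '' {c | Sum.inl c ∈ B} := by
        ext x
        cases x with
        | inl c => simp [dupProj]
        | inr p =>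
          simp only [Set.mem_preimage, dupProj, Set.mem_image, Set.mem_setOf_eq]
          constructor
          · intro h
            obtain ⟨c, hc⟩ := hBsub h
            exact absurd hc.symm (by simp)
          · rintro ⟨c, _, h⟩; exact absurd h (by simp)
      have hEq2 : B = Sum.inl '' {c | Sum.inl c ∈ B} := by
        ext x
        constructor
        · intro hx
          obtain ⟨c, rfl⟩ := hBsub hx
          exact ⟨c, hx, rfl⟩
        · rintro ⟨c, hc, rfl⟩; exact hc
      calc (dupProj (k := k) ⁻¹' B).ncard
          = ({c | Sum.inl c ∈ B} : Set C).ncard := by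
            rw [hEq, Set.ncard_image_of_injective _ Sum.inl_injective]
        _ = B.ncard := by
            conv_rhs => rw [hEq2]
            rw [Set.ncard_image_of_injective _ Sum.inl_injective]
        _ ≤ k := hBk
    · intro H' hH' hH't
      have h1 : ∀ j, ((dupProj '' H') ∩ Y j).Nonempty := by
        intro j
        obtain ⟨x, hx, hxY⟩ := hH' j
        exact ⟨dupProj x, ⟨x, hx, rfl⟩, hxY⟩
      have h2 : (dupProj '' H').ncard ≤ t :=
        le_trans (Set.ncard_image_le (Set.toFinite _)) hH't
      obtain ⟨x, ⟨y, hy, rfl⟩, hxB⟩ := hB _ h1 h2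
      exact ⟨y, hy, hxB⟩
  · rintro ⟨B', hB'k, hB'⟩
    have hchoose : ∀ d : D, ∃ i : Fin (k + 1), Sum.inr (d, i) ∉ B' := by
      intro d
      by_contra h
      push_neg at h
      have hsub : (fun i : Fin (k + 1) => (Sum.inr (d, i) : C ⊕ (D × Fin (k + 1)))) ''
          Set.univ ⊆ B' := by
        rintro _ ⟨i, _, rfl⟩; exact h i
      have hinj : Function.Injective
          (fun i : Fin (k + 1) => (Sum.inr (d, i) : C ⊕ (D × Fin (k + 1)))) := by
        intro a b hab
        simpa using hab
      have hcard : ((fun i : Fin (k + 1) => (Sum.inr (d, i) : C ⊕ (D × Fin (k + 1)))) ''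
          Set.univ).ncard = k + 1 := by
        rw [Set.ncard_image_of_injective _ hinj, Set.ncard_univ]
        simp
      have := Set.ncard_le_ncard hsub (Set.toFinite _)
      omega
    choose i hi using hchoose
    refine ⟨Sum.inl '' {c : C | (Sum.inl c : C ⊕ (D × Fin (k + 1))) ∈ B'}, ?_, ?_, ?_⟩
    · exact Set.image_subset_range _ _
    · have hsub : Sum.inl '' {c : C | (Sum.inl c : C ⊕ (D × Fin (k + 1))) ∈ B'} ⊆ B' := by
        rintro _ ⟨c, hc, rfl⟩; exact hc
      calc (Sum.inl '' {c : C | (Sum.inl c : C ⊕ (D × Fin (k + 1))) ∈ B'}).ncard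
          = ({c : C | (Sum.inl c : C ⊕ (D × Fin (k + 1))) ∈ B'}).ncard :=
            Set.ncard_image_of_injective _ Sum.inl_injective
        _ = (Sum.inl '' {c : C | (Sum.inl c : C ⊕ (D × Fin (k + 1))) ∈ B'}).ncard :=
            (Set.ncard_image_of_injective _ Sum.inl_injective).symm
        _ ≤ B'.ncard := Set.ncard_le_ncard hsub (Set.toFinite _)
        _ ≤ k := hB'k
    · intro H hH hHt
      set f : C ⊕ D → C ⊕ (D × Fin (k + 1)) := fun x =>
        match x with
        | Sum.inl c => Sum.inl c
        | Sum.inr d => Sum.inr (d, i d) with hf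
      have hproj : ∀ x, dupProj (f x) = x := by
        rintro (c | d) <;> simp [hf, dupProj]
      have h1 : ∀ j, ((f '' H) ∩ dupProj ⁻¹' (Y j)).Nonempty := by
        intro j
        obtain ⟨x, hx, hxY⟩ := hH j
        exact ⟨f x, ⟨x, hx, rfl⟩, by simpa [hproj x] using hxY⟩
      have h2 : (f '' H).ncard ≤ t :=
        le_trans (Set.ncard_image_le (Set.toFinite _)) hHt
      obtain ⟨y, ⟨x, hxH, rfl⟩, hyB'⟩ := hB' _ h1 h2
      cases x with
      | inl c => exact ⟨Sum.inl c, hxH, ⟨c, hyB', rfl⟩⟩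
      | inr d => exact absurd hyB' (hi d)
end

section
/- Let C and D be finite types, let E be a finite type, let k, t ∈ ℕ, and let S : C ⊕ D → Finset E be an indexed family of sets. Define the new index type I' = C ⊕ (D × Fin (k+1)) and the family S' : I' → Finset E by S'(inl c) = S(inl c) and S'(inr (d, i)) = S(inr d). Then there exists a set B ⊆ {inl c : c ∈ C} with |B| ≤ k such that every set cover of S of size at most t intersects B, if and only if there exists a set B' ⊆ I' with |B'| ≤ k such that every set cover of S' of size at most t intersects B'. -/
/-- A set of indices `I` is a set cover for the family `S` if every element of `E` lies in
`S i` for some `i ∈ I`. -/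
def IsSetCover {ι E : Type*} (S : ι → Finset E) (I : Set ι) : Prop :=
  ∀ e : E, ∃ i ∈ I, e ∈ S i

theorem setCover_interdiction_duplication {C D E : Type*} [Fintype C] [Fintype D] [Fintype E]
    (k t : ℕ) (S : C ⊕ D → Finset E) :
    (∃ B : Set (C ⊕ D), B ⊆ Set.range (Sum.inl : C → C ⊕ D) ∧ B.ncard ≤ k ∧
        ∀ I : Set (C ⊕ D), IsSetCover S I → I.ncard ≤ t → (I ∩ B).Nonempty) ↔
      (∃ B' : Set (C ⊕ (D × Fin (k + 1))), B'.ncard ≤ k ∧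
        ∀ I' : Set (C ⊕ (D × Fin (k + 1))),
          IsSetCover (fun i' => S (dupProj i')) I' → I'.ncard ≤ t → (I' ∩ B').Nonempty) := by
  constructor
  · rintro ⟨B, hBsub, hBcard, hB⟩
    refine ⟨Sum.inl '' {c | Sum.inl c ∈ B}, ?_, ?_⟩
    · calc (Sum.inl '' {c | Sum.inl c ∈ B}).ncard
          = {c | Sum.inl c ∈ B}.ncard := Set.ncard_image_of_injective _ Sum.inl_injective
        _ = (Sum.inl '' {c | Sum.inl c ∈ B} : Set (C ⊕ D)).ncard :=
            (Set.ncard_image_of_injective _ Sum.inl_injective).symm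
        _ ≤ B.ncard := by
            apply Set.ncard_le_ncard _ B.toFinite
            rintro x ⟨c, hc, rfl⟩; exact hc
        _ ≤ k := hBcard
    · intro I' hcov hcard
      obtain ⟨x, hxI, hxB⟩ := hB (dupProj '' I')
        (fun e => by
          obtain ⟨i, hi, hei⟩ := hcov e
          exact ⟨dupProj i, ⟨i, hi, rfl⟩, hei⟩)
        (le_trans (Set.ncard_image_le I'.toFinite) hcard)
      obtain ⟨c, rfl⟩ := hBsub hxB
      obtain ⟨i', hi', hproj⟩ := hxI
      have : i' = Sum.inl c := by
        cases i' with
        | inl c' => simpa [dupProj] using hproj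
        | inr di => simp [dupProj] at hproj
      subst this
      exact ⟨Sum.inl c, hi', ⟨c, hxB, rfl⟩⟩
  · rintro ⟨B', hBcard, hB⟩
    have hf : ∀ d : D, ∃ i : Fin (k + 1), Sum.inr (d, i) ∉ B' := by
      intro d
      by_contra h
      push_neg at h
      have hsub : (fun i : Fin (k+1) => (Sum.inr (d, i) : C ⊕ (D × Fin (k+1)))) '' Set.univ ⊆ B' := by
        rintro x ⟨i, _, rfl⟩; exact h i
      have hinj : Function.Injective
          (fun i : Fin (k+1) => (Sum.inr (d, i) : C ⊕ (D × Fin (k+1)))) := by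
        intro a b hab; simpa using hab
      have := Set.ncard_le_ncard hsub B'.toFinite
      rw [Set.ncard_image_of_injective _ hinj, Set.ncard_univ, Nat.card_eq_fintype_card,
        Fintype.card_fin] at this
      omega
    choose f hfd using hf
    set g : C ⊕ D → C ⊕ (D × Fin (k + 1)) := fun i =>
      match i with
      | Sum.inl c => Sum.inl c
      | Sum.inr d => Sum.inr (d, f d)
    have hginj : Function.Injective g := by
      have : ∀ i, dupProj (g i) = i := by rintro (c | d) <;> rfl
      intro a b hab
      rw [← this a, ← this b, hab]
    have hgS : ∀ i, S (dupProj (g i)) = S i := by rintro (c | d) <;> rfl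
    refine ⟨Sum.inl '' {c | (Sum.inl c : C ⊕ (D × Fin (k+1))) ∈ B'}, Set.image_subset_range _ _, ?_, ?_⟩
    · calc (Sum.inl '' {c | (Sum.inl c : C ⊕ (D × Fin (k+1))) ∈ B'}).ncard
          = {c | (Sum.inl c : C ⊕ (D × Fin (k+1))) ∈ B'}.ncard :=
            Set.ncard_image_of_injective _ Sum.inl_injective
        _ = ((Sum.inl '' {c | (Sum.inl c : C ⊕ (D × Fin (k+1))) ∈ B'} : Set (C ⊕ (D × Fin (k+1))))).ncard :=
            (Set.ncard_image_of_injective _ Sum.inl_injective).symm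
        _ ≤ B'.ncard := by
            apply Set.ncard_le_ncard _ B'.toFinite
            rintro x ⟨c, hc, rfl⟩; exact hc
        _ ≤ k := hBcard
    · intro I hcov hcard
      obtain ⟨x, hxI, hxB⟩ := hB (g '' I)
        (fun e => by
          obtain ⟨i, hi, hei⟩ := hcov e
          exact ⟨g i, ⟨i, hi, rfl⟩, by simpa [hgS i] using hei⟩)
        (by rwa [Set.ncard_image_of_injective _ hginj])
      obtain ⟨i, hi, rfl⟩ := hxI
      cases i with
      | inl c => exact ⟨Sum.inl c, hi, ⟨c, hxB, rfl⟩⟩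
      | inr d => exact absurd hxB (hfd d)
end

section
/- Let C and D be finite types, let J be a nonempty finite type of clients, let k, t ∈ ℕ, and consider the uncapacitated facility location instance with facility set I = C ⊕ D, opening costs f : I → ℕ and service costs c : I → J → ℕ. Define the duplicated instance with facility set I' = C ⊕ (D × Fin (k+1)), projection ρ : I' → I given by ρ(inl c₀) = inl c₀ and ρ(inr (d, i)) = inr d, opening costs f' = f ∘ ρ and service costs c' i' j = c (ρ i') j. Then there exists a set B ⊆ {inl c₀ : c₀ ∈ C} with |B| ≤ k such that every nonempty set F ⊆ I with cost(F) ≤ t intersects B, if and only if there exists a set B' ⊆ I' with |B'| ≤ k such that every nonempty set F' ⊆ I' with cost'(F') ≤ t intersects B'. -/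
/-- The cost of opening a (nonempty) set `F` of facilities: the total opening cost plus, for each
client, the minimum service cost over opened facilities. -/
noncomputable def uflCost {I J : Type*} [Fintype J] (f : I → ℕ) (c : I → J → ℕ)
    (F : Finset I) : ℕ :=
  (∑ i ∈ F, f i) + ∑ j : J, sInf ((fun i => c i j) '' (F : Set I))

lemma my_sum_image_le {α β : Type*} [DecidableEq β] (s : Finset α) (g : α → β) (f : β → ℕ) :
    ∑ b ∈ s.image g, f b ≤ ∑ a ∈ s, f (g a) := by
  classical
  induction s using Finset.induction with
  | empty => simp
  | @insert a s h ih =>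
      rw [Finset.image_insert, Finset.sum_insert h]
      by_cases hg : g a ∈ s.image g
      · rw [Finset.insert_eq_self.2 hg]; omega
      · rw [Finset.sum_insert hg]; omega

lemma cost_image_le {I I' J : Type*} [Fintype J] [DecidableEq I] (ρ : I' → I)
    (f : I → ℕ) (c : I → J → ℕ) (F' : Finset I') :
    uflCost f c (F'.image ρ) ≤ uflCost (fun i' => f (ρ i')) (fun i' j => c (ρ i') j) F' := by
  unfold uflCost
  have hserv : ∀ j : J, ((fun i => c i j) '' ((F'.image ρ) : Set I)) =
      ((fun i' => c (ρ i') j) '' (F' : Set I')) := by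
    intro j
    rw [Finset.coe_image, Set.image_image]
  refine add_le_add (my_sum_image_le _ _ _) (le_of_eq ?_)
  exact Finset.sum_congr rfl fun j _ => by rw [hserv j]

lemma cost_section {I I' J : Type*} [Fintype J] [DecidableEq I'] (ρ : I' → I) (σ : I → I')
    (hσ : ∀ i, ρ (σ i) = i) (f : I → ℕ) (c : I → J → ℕ) (F : Finset I) :
    uflCost (fun i' => f (ρ i')) (fun i' j => c (ρ i') j) (F.image σ) = uflCost f c F := by
  have hinj : Function.Injective σ := Function.LeftInverse.injective hσ
  unfold uflCost
  congr 1
  · rw [Finset.sum_image (fun a _ b _ h => hinj h)]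
    exact Finset.sum_congr rfl fun i _ => by rw [hσ]
  · refine Finset.sum_congr rfl fun j _ => ?_
    congr 1
    rw [Finset.coe_image, Set.image_image]
    simp [hσ]

theorem ufl_interdiction_duplication {C D J : Type*} [Fintype C] [Fintype D] [Fintype J]
    [Nonempty J] (k t : ℕ) (f : C ⊕ D → ℕ) (c : C ⊕ D → J → ℕ) :
    (∃ B : Set (C ⊕ D), B ⊆ Set.range (Sum.inl : C → C ⊕ D) ∧ B.ncard ≤ k ∧
        ∀ F : Finset (C ⊕ D), F.Nonempty → uflCost f c F ≤ t → ∃ i ∈ F, i ∈ B) ↔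
      (∃ B' : Set (C ⊕ (D × Fin (k + 1))), B'.ncard ≤ k ∧
        ∀ F' : Finset (C ⊕ (D × Fin (k + 1))), F'.Nonempty →
          uflCost (fun i' => f (dupProj i')) (fun i' j => c (dupProj i') j) F' ≤ t →
            ∃ i' ∈ F', i' ∈ B') := by
  classical
  constructor
  · rintro ⟨B, hBsub, hBk, hB⟩
    refine ⟨Sum.inl '' (Sum.inl ⁻¹' B), ?_, ?_⟩
    · calc (Sum.inl '' (Sum.inl ⁻¹' B) : Set (C ⊕ (D × Fin (k+1)))).ncard
          = (Sum.inl ⁻¹' B : Set C).ncard := Set.ncard_image_of_injective _ Sum.inl_injective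
        _ = (Sum.inl '' (Sum.inl ⁻¹' B) : Set (C ⊕ D)).ncard :=
            (Set.ncard_image_of_injective _ Sum.inl_injective).symm
        _ = B.ncard := by rw [Set.image_preimage_eq_of_subset (by simpa using hBsub)]
        _ ≤ k := hBk
    · intro F' hne hcost
      have hFne : (F'.image dupProj).Nonempty := hne.image _
      have hle := cost_image_le (dupProj (k := k)) f c F'
      obtain ⟨i, hiF, hiB⟩ := hB (F'.image dupProj) hFne (le_trans hle hcost)
      obtain ⟨c₀, rfl⟩ := hBsub hiB
      obtain ⟨i', hi'F, hi'⟩ := Finset.mem_image.1 hiF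
      have : i' = Sum.inl c₀ := by
        cases i' with
        | inl a => simpa [dupProj] using hi'
        | inr b => obtain ⟨d, m⟩ := b; simp [dupProj] at hi'
      subst this
      exact ⟨Sum.inl c₀, hi'F, ⟨c₀, hiB, rfl⟩⟩
  · rintro ⟨B', hBk, hB⟩
    have hBfin : B'.Finite := Set.toFinite _
    refine ⟨Sum.inl '' (Sum.inl ⁻¹' B'), Set.image_subset_range _ _, ?_, ?_⟩
    · calc (Sum.inl '' (Sum.inl ⁻¹' B') : Set (C ⊕ D)).ncard
          = (Sum.inl ⁻¹' B' : Set C).ncard := Set.ncard_image_of_injective _ Sum.inl_injective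
        _ = (Sum.inl '' (Sum.inl ⁻¹' B') : Set (C ⊕ (D × Fin (k+1)))).ncard :=
            (Set.ncard_image_of_injective _ Sum.inl_injective).symm
        _ ≤ B'.ncard := Set.ncard_le_ncard (Set.image_preimage_subset _ _) hBfin
        _ ≤ k := hBk
    · intro F hne hcost
      -- choose for each d a copy not in B'
      have hch : ∀ d : D, ∃ m : Fin (k+1), Sum.inr (d, m) ∉ B' := by
        intro d
        by_contra h
        push_neg at h
        have hsub : Set.range (fun m : Fin (k+1) => (Sum.inr (d, m) : C ⊕ (D × Fin (k+1)))) ⊆ B' := by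
          rintro _ ⟨m, rfl⟩; exact h m
        have hinj : Function.Injective (fun m : Fin (k+1) => (Sum.inr (d, m) : C ⊕ (D × Fin (k+1)))) := by
          intro a b hab
          simpa using hab
        have hle := Set.ncard_le_ncard hsub hBfin
        rw [← Set.image_univ, Set.ncard_image_of_injective _ hinj, Set.ncard_univ,
          Nat.card_eq_fintype_card, Fintype.card_fin] at hle
        omega
      choose g hg using hch
      set σ : C ⊕ D → C ⊕ (D × Fin (k+1)) := fun i =>
        match i with
        | Sum.inl c₀ => Sum.inl c₀
        | Sum.inr d => Sum.inr (d, g d) with hσdef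
      have hsec : ∀ i, dupProj (σ i) = i := by
        rintro (c₀ | d) <;> simp [σ, dupProj]
      have hcost' := cost_section dupProj σ hsec f c F
      obtain ⟨i', hi'F, hi'B⟩ := hB (F.image σ) (hne.image _) (by rw [hcost']; exact hcost)
      obtain ⟨i, hiF, hi⟩ := Finset.mem_image.1 hi'F
      cases i with
      | inl c₀ =>
          refine ⟨Sum.inl c₀, hiF, ⟨c₀, ?_, rfl⟩⟩
          simp only [σ] at hi
          show Sum.inl c₀ ∈ B'
          rw [hi]
          exact hi'B
      | inr d =>
          exfalso
          apply hg d
          simp only [σ] at hi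
          rw [← hi] at hi'B
          exact hi'B
end

section
/- Let C and D be finite types, let J be a nonempty finite type of clients, let k, p, t ∈ ℕ, and consider the p-center instance with facility set I = C ⊕ D and service costs c : I → J → ℕ. Define the duplicated instance with facility set I' = C ⊕ (D × Fin (k+1)), projection ρ : I' → I given by ρ(inl c₀) = inl c₀ and ρ(inr (d, i)) = inr d, and service costs c' i' j = c (ρ i') j. Then there exists a set B ⊆ {inl c₀ : c₀ ∈ C} with |B| ≤ k such that every p-center solution F ⊆ I with value at most t intersects B, if and only if there exists a set B' ⊆ I' with |B'| ≤ k such that every p-center solution F' ⊆ I' (with respect to c') with value at most t intersects B'. -/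
/-- `F` is a `p`-center solution with value at most `t`: a nonempty set of at most `p`
facilities such that every client is served at cost at most `t` by its closest open facility. -/
noncomputable def IsPCenterSol {I J : Type*} [Fintype J] (c : I → J → ℕ) (p t : ℕ)
    (F : Finset I) : Prop :=
  F.Nonempty ∧ F.card ≤ p ∧ ∀ j : J, sInf ((fun i => c i j) '' (F : Set I)) ≤ t

theorem pCenter_interdiction_duplication {C D J : Type*} [Fintype C] [Fintype D] [Fintype J]
    [Nonempty J] (k p t : ℕ) (c : C ⊕ D → J → ℕ) :
    (∃ B : Set (C ⊕ D), B ⊆ Set.range (Sum.inl : C → C ⊕ D) ∧ B.ncard ≤ k ∧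
        ∀ F : Finset (C ⊕ D), IsPCenterSol c p t F → ∃ i ∈ F, i ∈ B) ↔
      (∃ B' : Set (C ⊕ (D × Fin (k + 1))), B'.ncard ≤ k ∧
        ∀ F' : Finset (C ⊕ (D × Fin (k + 1))),
          IsPCenterSol (fun i' j => c (dupProj i') j) p t F' → ∃ i' ∈ F', i' ∈ B') := by
  classical
  constructor
  · rintro ⟨B, hBsub, hBcard, hBhit⟩
    refine ⟨Sum.inl '' (Sum.inl ⁻¹' B), ?_, ?_⟩
    · have h1 : (Sum.inl '' (Sum.inl ⁻¹' B) : Set (C ⊕ (D × Fin (k + 1)))).ncard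
          = (Sum.inl ⁻¹' B).ncard := Set.ncard_image_of_injective _ Sum.inl_injective
      have h2 : (Sum.inl '' (Sum.inl ⁻¹' B) : Set (C ⊕ D)) = B := by
        rw [Set.image_preimage_eq_inter_range, Set.inter_eq_left.mpr hBsub]
      have h3 : (Sum.inl '' (Sum.inl ⁻¹' B) : Set (C ⊕ D)).ncard
          = (Sum.inl ⁻¹' B).ncard := Set.ncard_image_of_injective _ Sum.inl_injective
      rw [h2] at h3
      omega
    · intro F' hF'
      obtain ⟨hne, hcard, hval⟩ := hF'
      obtain ⟨i, hiF, hiB⟩ := hBhit (F'.image dupProj) ⟨hne.image _,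
        le_trans (Finset.card_image_le) hcard, by
          intro j
          have : ((fun i => c i j) '' ((F'.image dupProj : Finset (C ⊕ D)) : Set (C ⊕ D)))
              = (fun i' => c (dupProj i') j) '' (F' : Set (C ⊕ (D × Fin (k + 1)))) := by
            rw [Finset.coe_image, Set.image_image]
          rw [this]; exact hval j⟩
      rw [Finset.mem_image] at hiF
      obtain ⟨i', hi'F, hi'⟩ := hiF
      obtain ⟨c₀, rfl⟩ := hBsub hiB
      match i', hi'F, hi' with
      | Sum.inl c', hF, h =>
        have hc : c' = c₀ := by simpa [dupProj] using h
        subst hc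
        exact ⟨Sum.inl c', hF, ⟨c', hiB, rfl⟩⟩
      | Sum.inr x, hF, h => simp [dupProj] at h
  · rintro ⟨B', hBcard, hBhit⟩
    have hfin : B'.Finite := Set.toFinite _
    have hσ : ∀ d : D, ∃ m : Fin (k + 1), Sum.inr (d, m) ∉ B' := by
      intro d
      by_contra h
      push_neg at h
      have hsub : Set.range (fun m : Fin (k + 1) => (Sum.inr (d, m) : C ⊕ (D × Fin (k + 1))))
          ⊆ B' := by rintro _ ⟨m, rfl⟩; exact h m
      have : k + 1 ≤ B'.ncard := by
        have := Set.ncard_le_ncard hsub hfin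
        rwa [← Set.image_univ, Set.ncard_image_of_injective _ (fun a b hab => by
          simpa using hab : Function.Injective
            (fun m : Fin (k + 1) => (Sum.inr (d, m) : C ⊕ (D × Fin (k + 1))))),
          Set.ncard_univ, Nat.card_eq_fintype_card, Fintype.card_fin] at this
      omega
    choose σd hσd using hσ
    set σ : C ⊕ D → C ⊕ (D × Fin (k + 1)) := fun i => match i with
      | Sum.inl c₀ => Sum.inl c₀
      | Sum.inr d => Sum.inr (d, σd d) with hσdef
    have hproj : ∀ i, dupProj (σ i) = i := by rintro (c₀ | d) <;> rfl
    refine ⟨Sum.inl '' (Sum.inl ⁻¹' B'), ?_, ?_, ?_⟩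
    · rintro _ ⟨c₀, _, rfl⟩; exact ⟨c₀, rfl⟩
    · have h1 : (Sum.inl '' (Sum.inl ⁻¹' B') : Set (C ⊕ D)).ncard
          = (Sum.inl ⁻¹' B').ncard := Set.ncard_image_of_injective _ Sum.inl_injective
      have h2 : ((Sum.inl '' (Sum.inl ⁻¹' B')) : Set (C ⊕ (D × Fin (k + 1)))).ncard
          = (Sum.inl ⁻¹' B').ncard := Set.ncard_image_of_injective _ Sum.inl_injective
      have h3 : ((Sum.inl '' (Sum.inl ⁻¹' B')) : Set (C ⊕ (D × Fin (k + 1)))) ⊆ B' := by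
        rw [Set.image_preimage_eq_inter_range]; exact Set.inter_subset_left
      have := Set.ncard_le_ncard h3 hfin
      omega
    · intro F hF
      obtain ⟨hne, hcard, hval⟩ := hF
      obtain ⟨i', hi'F, hi'B⟩ := hBhit (F.image σ) ⟨hne.image _,
        le_trans (Finset.card_image_le) hcard, by
          intro j
          have : ((fun i' => c (dupProj i') j) ''
              ((F.image σ : Finset (C ⊕ (D × Fin (k + 1)))) : Set (C ⊕ (D × Fin (k + 1)))))
              = (fun i => c i j) '' (F : Set (C ⊕ D)) := by
            rw [Finset.coe_image, Set.image_image]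
            exact Set.image_congr fun i _ => by rw [hproj]
          rw [this]; exact hval j⟩
      rw [Finset.mem_image] at hi'F
      obtain ⟨i, hiF, rfl⟩ := hi'F
      match i, hiF with
      | Sum.inl c₀, hiF => exact ⟨Sum.inl c₀, hiF, c₀, hi'B, rfl⟩
      | Sum.inr d, hiF => exact absurd hi'B (hσd d)
end

section
/- Let C and D be finite types, let J be a nonempty finite type of clients, let k, p, t ∈ ℕ, and consider the p-median instance with facility set I = C ⊕ D and service costs c : I → J → ℕ. Define the duplicated instance with facility set I' = C ⊕ (D × Fin (k+1)), projection ρ : I' → I given by ρ(inl c₀) = inl c₀ and ρ(inr (d, i)) = inr d, and service costs c' i' j = c (ρ i') j. Then there exists a set B ⊆ {inl c₀ : c₀ ∈ C} with |B| ≤ k such that every p-median solution F ⊆ I with value at most t intersects B, if and only if there exists a set B' ⊆ I' with |B'| ≤ k such that every p-median solution F' ⊆ I' (with respect to c') with value at most t intersects B'. -/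
/-- `F` is a `p`-median solution with value at most `t`: a nonempty set of at most `p`
facilities such that the sum over clients of the minimum service cost is at most `t`. -/
noncomputable def IsPMedianSol {I J : Type*} [Fintype J] (c : I → J → ℕ) (p t : ℕ)
    (F : Finset I) : Prop :=
  F.Nonempty ∧ F.card ≤ p ∧ (∑ j : J, sInf ((fun i => c i j) '' (F : Set I))) ≤ t

lemma dupProj_eq_inl {C D : Type*} {k : ℕ} {x : C ⊕ (D × Fin (k + 1))} {a : C}
    (h : dupProj x = Sum.inl a) : x = Sum.inl a := by
  cases x with
  | inl c => simp [dupProj] at h; simp [h]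
  | inr p => simp [dupProj] at h

lemma sol_image {C D J : Type*} [Fintype J] [DecidableEq (C ⊕ D)] {k p t : ℕ} (c : C ⊕ D → J → ℕ)
    (F' : Finset (C ⊕ (D × Fin (k + 1))))
    (h : IsPMedianSol (fun i' j => c (dupProj i') j) p t F') :
    IsPMedianSol c p t (F'.image dupProj) := by
  obtain ⟨hne, hcard, hcost⟩ := h
  refine ⟨hne.image _, le_trans Finset.card_image_le hcard, ?_⟩
  have : ∀ j : J, (fun i => c i j) '' ↑(F'.image dupProj)
      = (fun i' => c (dupProj i') j) '' (↑F' : Set (C ⊕ (D × Fin (k + 1)))) := by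
    intro j
    rw [Finset.coe_image, Set.image_image]
  simp only [this]
  exact hcost

theorem pMedian_interdiction_duplication {C D J : Type*} [Fintype C] [Fintype D] [Fintype J]
    [Nonempty J] (k p t : ℕ) (c : C ⊕ D → J → ℕ) :
    (∃ B : Set (C ⊕ D), B ⊆ Set.range (Sum.inl : C → C ⊕ D) ∧ B.ncard ≤ k ∧
        ∀ F : Finset (C ⊕ D), IsPMedianSol c p t F → ∃ i ∈ F, i ∈ B) ↔
      (∃ B' : Set (C ⊕ (D × Fin (k + 1))), B'.ncard ≤ k ∧
        ∀ F' : Finset (C ⊕ (D × Fin (k + 1))),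
          IsPMedianSol (fun i' j => c (dupProj i') j) p t F' → ∃ i' ∈ F', i' ∈ B') := by
  classical
  constructor
  · rintro ⟨B, hBsub, hBk, hB⟩
    refine ⟨(dupProj : C ⊕ (D × Fin (k + 1)) → C ⊕ D) ⁻¹' B, ?_, ?_⟩
    · have hinj : Set.InjOn (dupProj : C ⊕ (D × Fin (k + 1)) → C ⊕ D)
          ((dupProj : C ⊕ (D × Fin (k + 1)) → C ⊕ D) ⁻¹' B) := by
        rintro x hx y hy hxy
        obtain ⟨a, ha⟩ := hBsub hx
        obtain ⟨b, hb⟩ := hBsub hy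
        have hx' := dupProj_eq_inl ha.symm
        have hy' := dupProj_eq_inl hb.symm
        rw [hx', hy']
        rw [hx', hy'] at hxy
        simpa [dupProj] using hxy
      have hmap : Set.MapsTo (dupProj : C ⊕ (D × Fin (k + 1)) → C ⊕ D)
          ((dupProj : C ⊕ (D × Fin (k + 1)) → C ⊕ D) ⁻¹' B) B := fun x hx => hx
      have hfin : B.Finite := Set.toFinite _
      exact le_trans (Set.ncard_le_ncard_of_injOn dupProj hmap hinj hfin) hBk
    · intro F' hF'
      obtain ⟨i, hiF, hiB⟩ := hB _ (sol_image c F' hF')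
      obtain ⟨i', hi'F', rfl⟩ := Finset.mem_image.mp hiF
      exact ⟨i', hi'F', hiB⟩
  · rintro ⟨B', hBk, hB'⟩
    have hpick : ∀ d : D, ∃ i : Fin (k + 1), (Sum.inr (d, i) : C ⊕ (D × Fin (k + 1))) ∉ B' := by
      intro d
      by_contra h
      push_neg at h
      have hsub : Set.range (fun i : Fin (k + 1) =>
          (Sum.inr (d, i) : C ⊕ (D × Fin (k + 1)))) ⊆ B' := by
        rintro _ ⟨i, rfl⟩; exact h i
      have hinj : Function.Injective
          (fun i : Fin (k + 1) => (Sum.inr (d, i) : C ⊕ (D × Fin (k + 1)))) := by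
        intro a b hab; simpa using hab
      have h1 : (Set.range (fun i : Fin (k + 1) =>
          (Sum.inr (d, i) : C ⊕ (D × Fin (k + 1))))).ncard = k + 1 := by
        rw [← Set.image_univ, Set.ncard_image_of_injective _ hinj, Set.ncard_univ]
        simp
      have h2 := Set.ncard_le_ncard hsub (Set.toFinite _)
      omega
    let f : C ⊕ D → C ⊕ (D × Fin (k + 1)) := fun x =>
      match x with
      | Sum.inl c₀ => Sum.inl c₀
      | Sum.inr d => Sum.inr (d, Classical.choose (hpick d))
    have hfd : ∀ x, dupProj (f x) = x := by
      rintro (c₀ | d) <;> simp [f, dupProj]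
    refine ⟨dupProj '' (B' ∩ Set.range (Sum.inl : C → C ⊕ (D × Fin (k + 1)))), ?_, ?_, ?_⟩
    · rintro _ ⟨x, ⟨hxB, a, rfl⟩, rfl⟩
      exact ⟨a, rfl⟩
    · calc (dupProj '' (B' ∩ Set.range Sum.inl)).ncard
          ≤ (B' ∩ Set.range Sum.inl).ncard := Set.ncard_image_le (Set.toFinite _)
        _ ≤ B'.ncard := Set.ncard_le_ncard Set.inter_subset_left (Set.toFinite _)
        _ ≤ k := hBk
    · intro F hF
      obtain ⟨hne, hcard, hcost⟩ := hF
      have hsol : IsPMedianSol (fun i' j => c (dupProj i') j) p t (F.image f) := by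
        refine ⟨hne.image _, le_trans Finset.card_image_le hcard, ?_⟩
        have : ∀ j : J, (fun i' : C ⊕ (D × Fin (k + 1)) => c (dupProj i') j) '' ↑(F.image f)
            = (fun i => c i j) '' ↑F := by
          intro j
          rw [Finset.coe_image, Set.image_image]
          simp only [hfd]
        simp only [this]
        exact hcost
      obtain ⟨i', hi'F, hi'B⟩ := hB' _ hsol
      obtain ⟨x, hxF, rfl⟩ := Finset.mem_image.mp hi'F
      cases x with
      | inl c₀ =>
        refine ⟨Sum.inl c₀, hxF, ?_⟩
        exact ⟨Sum.inl c₀, ⟨hi'B, ⟨c₀, rfl⟩⟩, rfl⟩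
      | inr d =>
        exact absurd hi'B (Classical.choose_spec (hpick d))
end

section
/- Let b, m, N ∈ ℕ with b ≥ 2 and m < b, let T : Fin m → Finset (Fin N) be a family of sets of positions, and let T* be a subset of Fin N. Then Σ_{j : Fin m} Σ_{i ∈ T j} b^(i : ℕ) = Σ_{i ∈ T*} b^(i : ℕ) if and only if the sets T j (j : Fin m) are pairwise disjoint and their union equals T*. -/
lemma digits_unique_aux (b : ℕ) (hb : 2 ≤ b) :
    ∀ (N : ℕ) (c d : ℕ → ℕ), (∀ i, c i < b) → (∀ i, d i < b) →
      (∑ i ∈ Finset.range N, c i * b ^ i) = ∑ i ∈ Finset.range N, d i * b ^ i →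
      ∀ i < N, c i = d i := by
  intro N
  induction N with
  | zero => intro c d _ _ _ i hi; omega
  | succ n ih =>
    intro c d hc hd hsum i hi
    have hb0 : 0 < b := by omega
    have hrw : ∀ e : ℕ → ℕ, (∑ i ∈ Finset.range (n + 1), e i * b ^ i)
        = e 0 + b * ∑ i ∈ Finset.range n, e (i + 1) * b ^ i := by
      intro e
      rw [Finset.sum_range_succ' (fun i => e i * b ^ i), Finset.mul_sum]
      simp only [pow_zero, mul_one]
      rw [add_comm]
      congr 1
      exact Finset.sum_congr rfl fun x _ => by ring
    rw [hrw c, hrw d] at hsum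
    have h0 : c 0 = d 0 := by
      have h1 : (c 0 + b * ∑ i ∈ Finset.range n, c (i + 1) * b ^ i) % b = c 0 := by
        rw [Nat.add_mul_mod_self_left]
        exact Nat.mod_eq_of_lt (hc 0)
      have h2 : (d 0 + b * ∑ i ∈ Finset.range n, d (i + 1) * b ^ i) % b = d 0 := by
        rw [Nat.add_mul_mod_self_left]
        exact Nat.mod_eq_of_lt (hd 0)
      rw [← h1, ← h2, hsum]
    have htail : (∑ i ∈ Finset.range n, c (i + 1) * b ^ i)
        = ∑ i ∈ Finset.range n, d (i + 1) * b ^ i := by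
      have := hsum
      rw [h0] at this
      have hmul : b * (∑ i ∈ Finset.range n, c (i + 1) * b ^ i)
          = b * ∑ i ∈ Finset.range n, d (i + 1) * b ^ i := by omega
      exact Nat.eq_of_mul_eq_mul_left hb0 hmul
    rcases i with _ | k
    · exact h0
    · exact ih (fun i => c (i + 1)) (fun i => d (i + 1)) (fun i => hc _) (fun i => hd _)
        htail k (by omega)

theorem no_carry_in_base_b (b m N : ℕ) (hb : 2 ≤ b) (hm : m < b)
    (T : Fin m → Finset (Fin N)) (Tstar : Finset (Fin N)) :
    (∑ j : Fin m, ∑ i ∈ T j, b ^ (i : ℕ)) = ∑ i ∈ Tstar, b ^ (i : ℕ) ↔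
      ((∀ j j' : Fin m, j ≠ j' → Disjoint (T j) (T j')) ∧
        Finset.univ.biUnion T = Tstar) := by
  constructor
  · intro hsum
    -- digit functions
    set C : ℕ → ℕ := fun n =>
      if h : n < N then (Finset.univ.filter (fun j => (⟨n, h⟩ : Fin N) ∈ T j)).card else 0 with hC
    set D : ℕ → ℕ := fun n =>
      if h : n < N then (if (⟨n, h⟩ : Fin N) ∈ Tstar then 1 else 0) else 0 with hD
    have hCb : ∀ n, C n < b := by
      intro n
      simp only [hC]
      split
      · calc (Finset.univ.filter (fun j => (⟨n, _⟩ : Fin N) ∈ T j)).card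
            ≤ (Finset.univ : Finset (Fin m)).card := Finset.card_filter_le _ _
          _ = m := by simp
          _ < b := hm
      · omega
    have hDb : ∀ n, D n < b := by
      intro n
      simp only [hD]
      split
      · split <;> omega
      · omega
    -- rewrite LHS
    have hL : (∑ j : Fin m, ∑ i ∈ T j, b ^ (i : ℕ))
        = ∑ n ∈ Finset.range N, C n * b ^ n := by
      rw [← Fin.sum_univ_eq_sum_range (fun n => C n * b ^ n) N]
      have : ∀ i : Fin N, C (i : ℕ) * b ^ (i : ℕ)
          = (Finset.univ.filter (fun j => i ∈ T j)).card * b ^ (i : ℕ) := by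
        intro i
        simp only [hC, dif_pos i.isLt]
      rw [Finset.sum_congr rfl (fun i _ => this i)]
      rw [Finset.sum_comm' (s := Finset.univ) (t := fun j => T j)
        (t' := Finset.univ) (s' := fun i => Finset.univ.filter (fun j => i ∈ T j))]
      · apply Finset.sum_congr rfl
        intro i _
        rw [Finset.sum_const, smul_eq_mul]
      · intro j i
        simp
    have hR : (∑ i ∈ Tstar, b ^ (i : ℕ)) = ∑ n ∈ Finset.range N, D n * b ^ n := by
      rw [← Fin.sum_univ_eq_sum_range (fun n => D n * b ^ n) N]
      have : ∀ i : Fin N, D (i : ℕ) * b ^ (i : ℕ)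
          = if i ∈ Tstar then b ^ (i : ℕ) else 0 := by
        intro i
        simp only [hD, dif_pos i.isLt]
        split <;> simp
      rw [Finset.sum_congr rfl (fun i _ => this i)]
      rw [Finset.sum_ite_mem, Finset.univ_inter]
    have key : ∀ i : Fin N,
        (Finset.univ.filter (fun j => i ∈ T j)).card = if i ∈ Tstar then 1 else 0 := by
      intro i
      have := digits_unique_aux b hb N C D hCb hDb (by rw [← hL, ← hR]; exact hsum)
        (i : ℕ) i.isLt
      simpa only [hC, hD, dif_pos i.isLt] using this
    constructor
    · intro j j' hjj'
      rw [Finset.disjoint_left]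
      intro i hij hij'
      have hsub : ({j, j'} : Finset (Fin m)) ⊆ Finset.univ.filter (fun j => i ∈ T j) := by
        intro x hx
        simp only [Finset.mem_insert, Finset.mem_singleton] at hx
        rcases hx with rfl | rfl <;> simp [hij, hij']
      have h2 : 2 ≤ (Finset.univ.filter (fun j => i ∈ T j)).card := by
        calc 2 = ({j, j'} : Finset (Fin m)).card := by
              rw [Finset.card_insert_of_notMem (by simpa using hjj'), Finset.card_singleton]
          _ ≤ _ := Finset.card_le_card hsub
      rw [key i] at h2
      split at h2 <;> omega
    · ext i
      simp only [Finset.mem_biUnion, Finset.mem_univ, true_and]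
      constructor
      · rintro ⟨j, hj⟩
        by_contra hi
        have := key i
        rw [if_neg hi, Finset.card_eq_zero, Finset.filter_eq_empty_iff] at this
        exact this (Finset.mem_univ j) hj
      · intro hi
        have := key i
        rw [if_pos hi] at this
        obtain ⟨j, hj⟩ := Finset.card_pos.mp (by rw [this]; exact Nat.one_pos)
        simp only [Finset.mem_filter] at hj
        exact ⟨j, hj.2⟩
  · rintro ⟨hdisj, hunion⟩
    rw [← hunion, Finset.sum_biUnion]
    intro j _ j' _ hjj'
    exact hdisj j j' hjj'
end

section
/- Let G be a simple graph on a finite vertex type V with edge set E, let T ⊆ V be a set of terminals, let C ⊆ E with D = E ∖ C, and let k, t ∈ ℕ. Define the graph G' on vertex type V ⊕ (Σ e : E, Fin (m e)), where m e = 1 for e ∈ C and m e = k + 1 for e ∈ D, in which a vertex v ∈ V is adjacent to a subdivision vertex ⟨e, i⟩ if and only if v is an endpoint of e, and there are no other edges. Then there exists a set B ⊆ C with |B| ≤ k such that the edge set of every Steiner tree of G for T with at most t edges intersects B, if and only if there exists a set B' of edges of G' with |B'| ≤ k such that the edge set of every Steiner tree of G' for {inl v : v ∈ T} with at most 2t edges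 intersects B'. -/
/-- The subdivision graph: every edge `e` of `G` is replaced by `m e` parallel subdivided
edges.  A vertex `v` of `G` is adjacent to a subdivision vertex `⟨e, i⟩` iff `v` is an
endpoint of `e`; there are no other edges. -/
def subdivGraph {V : Type*} (G : SimpleGraph V) (m : G.edgeSet → ℕ) :
    SimpleGraph (V ⊕ (Σ e : G.edgeSet, Fin (m e))) where
  Adj x y :=
    match x, y with
    | Sum.inl v, Sum.inr p => v ∈ (p.1 : Sym2 V)
    | Sum.inr p, Sum.inl v => v ∈ (p.1 : Sym2 V)
    | _, _ => False
  symm := by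
    constructor
    rintro (v | p) (w | q) h
    · exact h.elim
    · exact h
    · exact h
    · exact h.elim
  loopless := ⟨by rintro (v | p) h <;> exact h⟩

/-- A Steiner tree of `H` for the terminal set `T` : a subgraph that is a tree (connected and
acyclic) whose vertex set contains `T`. -/
def IsSteinerTree {W : Type*} (H : SimpleGraph W) (T : Set W) (H' : H.Subgraph) : Prop :=
  H'.coe.IsTree ∧ T ⊆ H'.verts

/-!
Contracting the subdivision vertices of a Steiner tree of the subdivided graph `G'` gives a
connected subgraph of `G` containing `T` with at most half as many edges, since each
subdivision vertex joins at most two vertices of `G`; conversely, subdividing a Steiner tree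
of `G` through one chosen copy of each of its edges gives a connected subgraph of `G'`
containing `T` with twice as many edges. A spanning tree of either is again a Steiner tree,
which transfers the hitting property in both directions. An edge of `C` has a single copy, so
hitting it in `G` amounts to hitting one of its two half-edges in `G'`. An edge outside `C`
has `k + 1` copies, so at most `k` edges of `G'` leave one copy untouched; subdividing
through untouched copies forces `B'` to hit a Steiner tree of `G` only through edges of `C`.
-/

theorem Set.ncard_mul_le_ncard_mul {α β : Type*} {s : Set α} {t : Set β}
    (r : α → β → Prop) {m n : ℕ} (ht : t.Finite)
    (hm : ∀ a ∈ s, m ≤ {b ∈ t | r a b}.ncard)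
    (hn : ∀ b ∈ t, {a ∈ s | r a b}.ncard ≤ n) : s.ncard * m ≤ t.ncard * n := by
  classical
  rcases s.finite_or_infinite with hs | hs
  · lift s to Finset α using hs
    lift t to Finset β using ht
    simp only [Set.ncard_coe_finset]
    refine Finset.card_mul_le_card_mul r (fun a ha => ?_) (fun b hb => ?_)
    · simpa [Finset.bipartiteAbove, ← Set.ncard_coe_finset] using hm a ha
    · simpa [Finset.bipartiteBelow, ← Set.ncard_coe_finset] using hn b hb
  · simp [hs.ncard]

namespace SimpleGraph.Subgraph

theorem Connected.exists_isSteinerTree_le {W : Type*} {G : SimpleGraph W} {H : G.Subgraph}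
    (hH : H.Connected) {T : Set W} (hT : T ⊆ H.verts) : ∃ K ≤ H, IsSteinerTree G T K := by
  obtain ⟨F, hFH, hF⟩ := hH.coe.exists_isTree_le
  let K : G.Subgraph :=
    { verts := H.verts
      Adj u w := ∃ hu hw, F.Adj ⟨u, hu⟩ ⟨w, hw⟩
      adj_sub := fun ⟨_, _, h⟩ => H.adj_sub (hFH h)
      edge_vert := fun ⟨hu, _, _⟩ => hu
      symm := ⟨fun _ _ ⟨hu, hw, h⟩ => ⟨hw, hu, h.symm⟩⟩ }
  have hKF : K.coe = F := by
    ext x y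
    exact ⟨fun ⟨_, _, h⟩ => h, fun h => ⟨x.2, y.2, h⟩⟩
  exact ⟨K, ⟨le_rfl, fun _ _ ⟨_, _, h⟩ => hFH h⟩, hKF ▸ hF, hT⟩

end SimpleGraph.Subgraph

open SimpleGraph Sum

theorem isSteinerTree_singletonSubgraph {W : Type*} {H : SimpleGraph W} {T : Set W} {a : W}
    (hT : T ⊆ {a}) : IsSteinerTree H T (H.singletonSubgraph a) :=
  ⟨IsTree.coe_singletonSubgraph H a, by simpa using hT⟩

namespace subdivGraph

variable {V : Type*} {G : SimpleGraph V} {m : G.edgeSet → ℕ}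

theorem mem_edgeSet {b : Sym2 (V ⊕ Σ e : G.edgeSet, Fin (m e))} :
    b ∈ (subdivGraph G m).edgeSet ↔
      ∃ v p, v ∈ (p.1 : Sym2 V) ∧ b = s(inl v, inr p) := by
  induction b using Sym2.ind with
  | h x y => rcases x with v | p <;> rcases y with w | q <;> simp [subdivGraph, Sym2.eq_swap]

theorem eq_of_inr_mem_of_inr_mem {b : Sym2 (V ⊕ Σ e : G.edgeSet, Fin (m e))}
    (hb : b ∈ (subdivGraph G m).edgeSet) {p q : Σ e : G.edgeSet, Fin (m e)}
    (hp : inr p ∈ b) (hq : inr q ∈ b) : p = q := by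
  obtain ⟨v, r, -, rfl⟩ := mem_edgeSet.1 hb
  simp only [Sym2.mem_iff, reduceCtorEq, inr.injEq, false_or] at hp hq
  rw [hp, hq]

def subdivVertsOf (B' : Set (Sym2 (V ⊕ Σ e : G.edgeSet, Fin (m e)))) :
    Set (Σ e : G.edgeSet, Fin (m e)) :=
  {p | ∃ b ∈ B', inr p ∈ b}

theorem ncard_subdivVertsOf_le [Finite V] {B' : Set (Sym2 (V ⊕ Σ e : G.edgeSet, Fin (m e)))}
    (hB' : B' ⊆ (subdivGraph G m).edgeSet) : (subdivVertsOf B').ncard ≤ B'.ncard := by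
  simpa using Set.ncard_mul_le_ncard_mul (s := subdivVertsOf B') (m := 1) (n := 1)
    (fun p b => inr p ∈ b)
    (Set.toFinite _)
    (fun p hp => Nat.one_le_iff_ne_zero.2 ((Set.ncard_pos (Set.toFinite _)).2 hp).ne')
    (fun b hb => Set.ncard_le_one_iff_subsingleton.2 fun p hp q hq =>
      eq_of_inr_mem_of_inr_mem (hB' hb) hp.2 hq.2)

theorem exists_not_mem_subdivVertsOf [Finite V]
    {B' : Set (Sym2 (V ⊕ Σ e : G.edgeSet, Fin (m e)))} (hB' : B' ⊆ (subdivGraph G m).edgeSet)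
    {e : G.edgeSet} (he : B'.ncard < m e) : ∃ i, ⟨e, i⟩ ∉ subdivVertsOf B' := by
  by_contra! h
  have := Set.ncard_le_ncard_of_injOn (Sigma.mk e) (s := Set.univ) (t := subdivVertsOf B')
    (fun i _ => h i) sigma_mk_injective.injOn (Set.toFinite _)
  simp only [Set.ncard_univ, Nat.card_eq_fintype_card, Fintype.card_fin] at this
  have := ncard_subdivVertsOf_le hB'
  omega

def halfEdgesOver (B : Set (Sym2 V)) : Set (Sym2 (V ⊕ Σ e : G.edgeSet, Fin (m e))) :=
  (fun p => s(inl (p.1 : Sym2 V).out.1, inr p)) '' {p | (p.1 : Sym2 V) ∈ B}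

theorem halfEdgesOver_subset_edgeSet (B : Set (Sym2 V)) :
    halfEdgesOver (m := m) B ⊆ (subdivGraph G m).edgeSet := by
  rintro _ ⟨p, -, rfl⟩
  exact Sym2.out_fst_mem _

theorem ncard_halfEdgesOver_le [Finite V] {B : Set (Sym2 V)}
    (hB : ∀ e : G.edgeSet, (e : Sym2 V) ∈ B → m e ≤ 1) :
    (halfEdgesOver (m := m) B).ncard ≤ B.ncard := by
  refine (Set.ncard_image_le (Set.toFinite _)).trans <|
    Set.ncard_le_ncard_of_injOn (fun p => (p.1 : Sym2 V)) (fun p hp => hp) ?_ (Set.toFinite _)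
  rintro ⟨e, i, hi⟩ he ⟨e', j, hj⟩ - h
  obtain rfl : e = e' := Subtype.ext h
  obtain rfl : i = j := by have := hB e he; omega
  rfl

def contraction (H'' : (subdivGraph G m).Subgraph) : G.Subgraph where
  verts := {v | inl v ∈ H''.verts}
  Adj u w := u ≠ w ∧ ∃ p, H''.Adj (inl u) (inr p) ∧ H''.Adj (inl w) (inr p)
  adj_sub := by
    rintro u w ⟨huw, p, hu, hw⟩
    have hp := (Sym2.mem_and_mem_iff huw).1 ⟨H''.adj_sub hu, H''.adj_sub hw⟩
    rw [← SimpleGraph.mem_edgeSet, ← hp]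
    exact p.1.2
  edge_vert := fun ⟨_, _, hu, _⟩ => hu.fst_mem
  symm := ⟨fun _ _ ⟨huw, p, hu, hw⟩ => ⟨huw.symm, p, hw, hu⟩⟩

section contraction

variable {H'' : (subdivGraph G m).Subgraph}

theorem exists_subdivVert_of_mem_edgeSet_contraction {f : Sym2 V}
    (hf : f ∈ (contraction H'').edgeSet) :
    ∃ p : Σ e : G.edgeSet, Fin (m e),
      (p.1 : Sym2 V) = f ∧ ∀ v ∈ f, H''.Adj (inl v) (inr p) := by
  induction f using Sym2.ind with
  | h u w =>
    obtain ⟨huw, p, hu, hw⟩ := hf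
    refine ⟨p, (Sym2.mem_and_mem_iff huw).1 ⟨H''.adj_sub hu, H''.adj_sub hw⟩, ?_⟩
    simpa using ⟨hu, hw⟩

theorem two_mul_ncard_edgeSet_contraction_le [Finite V] :
    2 * (contraction H'').edgeSet.ncard ≤ H''.edgeSet.ncard := by
  have := Set.ncard_mul_le_ncard_mul (s := (contraction H'').edgeSet) (t := H''.edgeSet)
    (m := 2) (n := 1) (fun f b => ∃ v p, (p.1 : Sym2 V) = f ∧ b = s(inl v, inr p))
    (Set.toFinite _) ?_ ?_
  · linarith
  · intro f hf
    induction f using Sym2.ind with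
    | h u w =>
      obtain ⟨huw, p, hu, hw⟩ := hf
      have hp := (Sym2.mem_and_mem_iff huw).1 ⟨H''.adj_sub hu, H''.adj_sub hw⟩
      rw [← Set.ncard_pair (a := s(inl u, inr p)) (b := s(inl w, inr p)) (by simpa using huw)]
      refine Set.ncard_le_ncard ?_ (Set.toFinite _)
      rintro _ (rfl | rfl)
      exacts [⟨hu, u, p, hp, rfl⟩, ⟨hw, w, p, hp, rfl⟩]
  · intro b hb
    refine Set.ncard_le_one_iff_subsingleton.2 ?_
    rintro _ ⟨-, v, p, rfl, rfl⟩ _ ⟨-, v', p', rfl, h⟩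
    obtain ⟨-, rfl⟩ : v = v' ∧ p = p' := by simpa [Sym2.eq_iff] using h
    rfl

theorem contraction_reachable_of_eq_or_adj {x : V ⊕ Σ e : G.edgeSet, Fin (m e)} {u w : V}
    (hu : inl u ∈ H''.verts) (hw : inl w ∈ H''.verts)
    (hxu : x = inl u ∨ H''.Adj x (inl u)) (hxw : x = inl w ∨ H''.Adj x (inl w)) :
    (contraction H'').coe.Reachable ⟨u, hu⟩ ⟨w, hw⟩ := by
  rcases x with a | p
  · have hnot : ∀ {v}, ¬ H''.Adj (inl a) (inl v) := fun h => (H''.adj_sub h).elim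
    simp only [inl.injEq, hnot, or_false] at hxu hxw
    subst hxu hxw
    rfl
  · simp only [reduceCtorEq, false_or] at hxu hxw
    by_cases huw : u = w
    · subst huw
      rfl
    · exact Adj.reachable (G := (contraction H'').coe) ⟨huw, p, hxu.symm, hxw.symm⟩

theorem exists_eq_or_adj_of_adj {x y : V ⊕ Σ e : G.edgeSet, Fin (m e)} (h : H''.Adj x y) :
    ∃ c, inl c ∈ H''.verts ∧
      (x = inl c ∨ H''.Adj x (inl c)) ∧ (y = inl c ∨ H''.Adj y (inl c)) := by
  rcases x with a | p <;> rcases y with b | q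
  · exact (H''.adj_sub h).elim
  · exact ⟨a, h.fst_mem, .inl rfl, .inr h.symm⟩
  · exact ⟨b, h.snd_mem, .inr h, .inl rfl⟩
  · exact (H''.adj_sub h).elim

theorem contraction_reachable_of_walk {x y : H''.verts} (q : H''.coe.Walk x y) {u w : V}
    (hu : inl u ∈ H''.verts) (hw : inl w ∈ H''.verts)
    (hxu : x.1 = inl u ∨ H''.Adj x (inl u)) (hyw : y.1 = inl w ∨ H''.Adj y (inl w)) :
    (contraction H'').coe.Reachable ⟨u, hu⟩ ⟨w, hw⟩ := by
  induction q generalizing u with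
  | nil => exact contraction_reachable_of_eq_or_adj hu hw hxu hyw
  | cons h q ih =>
    obtain ⟨c, hc, hxc, hzc⟩ := exists_eq_or_adj_of_adj h
    exact (contraction_reachable_of_eq_or_adj hu hc hxu hxc).trans (ih hc hzc hyw)

theorem contraction_connected (hH'' : H''.Connected) {v : V} (hv : inl v ∈ H''.verts) :
    (contraction H'').Connected := by
  rw [Subgraph.connected_iff]
  refine ⟨⟨fun ⟨u, hu⟩ ⟨w, hw⟩ => ?_⟩, ⟨v, hv⟩⟩
  obtain ⟨q⟩ := hH''.coe ⟨inl u, hu⟩ ⟨inl w, hw⟩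
  exact contraction_reachable_of_walk q hu hw (.inl rfl) (.inl rfl)

end contraction

def subdivision (H' : G.Subgraph) (c : ∀ e : G.edgeSet, Fin (m e)) :
    (subdivGraph G m).Subgraph where
  verts := inl '' H'.verts ∪
    {x | ∃ e : G.edgeSet, (e : Sym2 V) ∈ H'.edgeSet ∧ x = inr ⟨e, c e⟩}
  Adj x y := ∃ e : G.edgeSet, (e : Sym2 V) ∈ H'.edgeSet ∧
    ∃ v ∈ (e : Sym2 V), s(x, y) = s(inl v, inr ⟨e, c e⟩)
  adj_sub := by
    rintro x y ⟨e, -, v, hv, h⟩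
    rw [← SimpleGraph.mem_edgeSet, h]
    exact hv
  edge_vert := by
    rintro x y ⟨e, he, v, hv, h⟩
    rcases Sym2.eq_iff.1 h with ⟨rfl, -⟩ | ⟨rfl, -⟩
    exacts [.inl ⟨v, H'.mem_verts_of_mem_edge he hv, rfl⟩, .inr ⟨e, he, rfl⟩]
  symm := ⟨fun _ _ ⟨e, he, v, hv, h⟩ => ⟨e, he, v, hv, Sym2.eq_swap.trans h⟩⟩

section subdivision

variable {H' : G.Subgraph} {c : ∀ e : G.edgeSet, Fin (m e)}

theorem mem_edgeSet_subdivision {b : Sym2 (V ⊕ Σ e : G.edgeSet, Fin (m e))} :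
    b ∈ (subdivision H' c).edgeSet ↔ ∃ e : G.edgeSet, (e : Sym2 V) ∈ H'.edgeSet ∧
      ∃ v ∈ (e : Sym2 V), b = s(inl v, inr ⟨e, c e⟩) := by
  induction b using Sym2.ind with
  | h x y => rfl

theorem ncard_edgeSet_subdivision_le [Finite V] :
    (subdivision H' c).edgeSet.ncard ≤ 2 * H'.edgeSet.ncard := by
  have := Set.ncard_mul_le_ncard_mul (s := (subdivision H' c).edgeSet) (t := H'.edgeSet)
    (m := 1) (n := 2)
    (fun b f => ∃ e : G.edgeSet, (e : Sym2 V) = f ∧ ∃ v ∈ f, b = s(inl v, inr ⟨e, c e⟩))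
    (Set.toFinite _) ?_ ?_
  · linarith
  · intro b hb
    obtain ⟨e, he, v, hv, rfl⟩ := mem_edgeSet_subdivision.1 hb
    rw [Nat.one_le_iff_ne_zero, ← Nat.pos_iff_ne_zero, Set.ncard_pos (Set.toFinite _)]
    exact ⟨_, he, e, rfl, v, hv, rfl⟩
  · intro f hf
    induction f using Sym2.ind with
    | h u w =>
      let e : G.edgeSet := ⟨s(u, w), H'.edgeSet_subset hf⟩
      refine (Set.ncard_le_ncard (t := {s(inl u, inr ⟨e, c e⟩), s(inl w, inr ⟨e, c e⟩)})
        ?_ (Set.toFinite _)).trans ((Set.ncard_insert_le _ _).trans (by simp))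
      rintro _ ⟨-, e', he', v, hv, rfl⟩
      obtain rfl : e' = e := Subtype.ext he'
      rcases Sym2.mem_iff.1 hv with rfl | rfl <;> simp

theorem subdivision_reachable_of_walk {a b : H'.verts} (q : H'.coe.Walk a b) :
    (subdivision H' c).coe.Reachable
      ⟨inl a, .inl ⟨a, a.2, rfl⟩⟩ ⟨inl b, .inl ⟨b, b.2, rfl⟩⟩ := by
  induction q with
  | nil => rfl
  | @cons a z b h q ih =>
    let e : G.edgeSet := ⟨s(a, z), H'.adj_sub h⟩
    have he : (e : Sym2 V) ∈ H'.edgeSet := h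
    have hp : inr ⟨e, c e⟩ ∈ (subdivision H' c).verts := .inr ⟨e, he, rfl⟩
    have h₁ : (subdivision H' c).coe.Adj ⟨inl a, .inl ⟨a, a.2, rfl⟩⟩ ⟨_, hp⟩ :=
      ⟨e, he, a, Sym2.mem_mk_left _ _, rfl⟩
    have h₂ : (subdivision H' c).coe.Adj ⟨_, hp⟩ ⟨inl z, .inl ⟨z, z.2, rfl⟩⟩ :=
      ⟨e, he, z, Sym2.mem_mk_right _ _, Sym2.eq_swap⟩
    exact h₁.reachable.trans (h₂.reachable.trans ih)

theorem subdivision_connected (hH' : H'.Connected) : (subdivision H' c).Connected := by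
  have hinl : ∀ x : (subdivision H' c).verts, ∃ v : H'.verts,
      (subdivision H' c).coe.Reachable x ⟨inl v, .inl ⟨v, v.2, rfl⟩⟩ := by
    rintro ⟨_, ⟨v, hv, rfl⟩ | ⟨e, he, rfl⟩⟩
    · exact ⟨⟨v, hv⟩, .rfl⟩
    · have hv := Sym2.out_fst_mem (e : Sym2 V)
      exact ⟨⟨_, H'.mem_verts_of_mem_edge he hv⟩,
        Adj.reachable ⟨e, he, _, hv, Sym2.eq_swap⟩⟩
  obtain ⟨a, ha⟩ := hH'.nonempty
  rw [Subgraph.connected_iff]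
  refine ⟨⟨fun x y => ?_⟩, ⟨inl a, .inl ⟨a, ha, rfl⟩⟩⟩
  obtain ⟨v, hx⟩ := hinl x
  obtain ⟨w, hy⟩ := hinl y
  obtain ⟨q⟩ := hH'.coe v w
  exact hx.trans ((subdivision_reachable_of_walk q).trans hy.symm)

end subdivision

variable {T : Set V} {t : ℕ}

theorem exists_subdivVert_of_isSteinerTree {B : Set (Sym2 V)} [Finite V]
    (hhit : ∀ H' : G.Subgraph, IsSteinerTree G T H' → H'.edgeSet.ncard ≤ t →
      (H'.edgeSet ∩ B).Nonempty)
    {H'' : (subdivGraph G m).Subgraph} (hH'' : IsSteinerTree (subdivGraph G m) (inl '' T) H'')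
    (ht : H''.edgeSet.ncard ≤ 2 * t) :
    ∃ p : Σ e : G.edgeSet, Fin (m e),
      (p.1 : Sym2 V) ∈ B ∧ ∀ v ∈ (p.1 : Sym2 V), H''.Adj (inl v) (inr p) := by
  have hconn : H''.Connected := ⟨hH''.1.connected⟩
  obtain ⟨x, -⟩ := hconn.nonempty
  -- If `T = ∅`, a single vertex is an edgeless Steiner tree, which `B` cannot hit.
  obtain ⟨v, hv⟩ : T.Nonempty := by
    rw [Set.nonempty_iff_ne_empty]
    rintro rfl
    obtain ⟨f, hf, -⟩ := hhit _ (isSteinerTree_singletonSubgraph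
      (a := x.elim id fun p => (p.1 : Sym2 V).out.1) (Set.empty_subset _)) (by simp)
    simp at hf
  obtain ⟨K, hK, hKT⟩ :=
    (contraction_connected hconn (hH''.2 ⟨v, hv, rfl⟩)).exists_isSteinerTree_le
      fun w hw => hH''.2 ⟨w, hw, rfl⟩
  have hKt : K.edgeSet.ncard ≤ t := by
    have := Set.ncard_le_ncard (Subgraph.edgeSet_mono hK) (Set.toFinite _)
    have := two_mul_ncard_edgeSet_contraction_le (H'' := H'')
    omega
  obtain ⟨f, hfK, hfB⟩ := hhit K hKT hKt
  obtain ⟨p, rfl, hp⟩ :=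
    exists_subdivVert_of_mem_edgeSet_contraction (Subgraph.edgeSet_mono hK hfK)
  exact ⟨p, hfB, hp⟩

theorem exists_mem_subdivVertsOf_of_isSteinerTree [Finite V] (c : ∀ e : G.edgeSet, Fin (m e))
    {B' : Set (Sym2 (V ⊕ Σ e : G.edgeSet, Fin (m e)))}
    (hhit : ∀ H'' : (subdivGraph G m).Subgraph, IsSteinerTree (subdivGraph G m) (inl '' T) H'' →
      H''.edgeSet.ncard ≤ 2 * t → (H''.edgeSet ∩ B').Nonempty)
    {H' : G.Subgraph} (hH' : IsSteinerTree G T H') (ht : H'.edgeSet.ncard ≤ t) :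
    ∃ e : G.edgeSet, (e : Sym2 V) ∈ H'.edgeSet ∧ ⟨e, c e⟩ ∈ subdivVertsOf B' := by
  obtain ⟨K, hK, hKT⟩ :=
    (subdivision_connected (c := c) ⟨hH'.1.connected⟩).exists_isSteinerTree_le (T := inl '' T)
      (by rintro _ ⟨v, hv, rfl⟩; exact .inl ⟨v, hH'.2 hv, rfl⟩)
  have hKt : K.edgeSet.ncard ≤ 2 * t :=
    (Set.ncard_le_ncard (Subgraph.edgeSet_mono hK) (Set.toFinite _)).trans
      (ncard_edgeSet_subdivision_le.trans (by omega))
  obtain ⟨b, hbK, hbB'⟩ := hhit K hKT hKt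
  obtain ⟨e, he, v, -, rfl⟩ := mem_edgeSet_subdivision.1 (Subgraph.edgeSet_mono hK hbK)
  exact ⟨e, he, _, hbB', Sym2.mem_mk_right _ _⟩

end subdivGraph

open Classical in
theorem steinerTree_interdiction_subdivision_general {V : Type*} [Fintype V] (G : SimpleGraph V)
    (T : Set V) (C : Set (Sym2 V)) (k t : ℕ)
    (m : G.edgeSet → ℕ)
    (hm : ∀ e : G.edgeSet, m e = if (e : Sym2 V) ∈ C then 1 else k + 1) :
    (∃ B : Set (Sym2 V), B ⊆ C ∧ B.ncard ≤ k ∧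
        ∀ H' : G.Subgraph, IsSteinerTree G T H' → H'.edgeSet.ncard ≤ t →
          (H'.edgeSet ∩ B).Nonempty) ↔
      (∃ B' : Set (Sym2 (V ⊕ (Σ e : G.edgeSet, Fin (m e)))),
        B' ⊆ (subdivGraph G m).edgeSet ∧ B'.ncard ≤ k ∧
        ∀ H'' : (subdivGraph G m).Subgraph,
          IsSteinerTree (subdivGraph G m) (Sum.inl '' T) H'' → H''.edgeSet.ncard ≤ 2 * t →
            (H''.edgeSet ∩ B').Nonempty) := by
  constructor
  · rintro ⟨B, hBC, hBk, hhit⟩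
    refine ⟨subdivGraph.halfEdgesOver B, subdivGraph.halfEdgesOver_subset_edgeSet B,
      (subdivGraph.ncard_halfEdgesOver_le fun e he => by simp [hm, hBC he]).trans hBk,
      fun H'' hH'' ht => ?_⟩
    obtain ⟨p, hpB, hp⟩ := subdivGraph.exists_subdivVert_of_isSteinerTree hhit hH'' ht
    exact ⟨_, hp _ (Sym2.out_fst_mem _), p, hpB, rfl⟩
  · rintro ⟨B', hB', hB'k, hhit⟩
    have hcopy : ∀ e : G.edgeSet, ∃ i, (e : Sym2 V) ∉ C →
        ⟨e, i⟩ ∉ subdivGraph.subdivVertsOf B' := by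
      intro e
      by_cases he : (e : Sym2 V) ∈ C
      · exact ⟨⟨0, by simp [hm, he]⟩, absurd he⟩
      · obtain ⟨i, hi⟩ :=
          subdivGraph.exists_not_mem_subdivVertsOf hB' (e := e) (by simp [hm, he]; omega)
        exact ⟨i, fun _ => hi⟩
    choose c hc using hcopy
    refine ⟨C ∩ (fun p => (p.1 : Sym2 V)) '' subdivGraph.subdivVertsOf B',
      Set.inter_subset_left, ?_, fun H' hH' ht => ?_⟩
    · calc _ ≤ ((fun p => (p.1 : Sym2 V)) '' subdivGraph.subdivVertsOf B').ncard :=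
            Set.ncard_le_ncard Set.inter_subset_right (Set.toFinite _)
        _ ≤ (subdivGraph.subdivVertsOf B').ncard := Set.ncard_image_le (Set.toFinite _)
        _ ≤ k := (subdivGraph.ncard_subdivVertsOf_le hB').trans hB'k
    · obtain ⟨e, he, hmem⟩ :=
        subdivGraph.exists_mem_subdivVertsOf_of_isSteinerTree c hhit hH' ht
      have heC : (e : Sym2 V) ∈ C := by_contra fun heC => hc e heC hmem
      exact ⟨e, he, heC, _, hmem, rfl⟩

open Classical in
theorem steinerTree_interdiction_subdivision {V : Type*} [Fintype V] (G : SimpleGraph V)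
    (T : Set V) (C : Set (Sym2 V)) (hC : C ⊆ G.edgeSet) (k t : ℕ)
    (m : G.edgeSet → ℕ)
    (hm : ∀ e : G.edgeSet, m e = if (e : Sym2 V) ∈ C then 1 else k + 1) :
    (∃ B : Set (Sym2 V), B ⊆ C ∧ B.ncard ≤ k ∧
        ∀ H' : G.Subgraph, IsSteinerTree G T H' → H'.edgeSet.ncard ≤ t →
          (H'.edgeSet ∩ B).Nonempty) ↔
      (∃ B' : Set (Sym2 (V ⊕ (Σ e : G.edgeSet, Fin (m e)))),
        B' ⊆ (subdivGraph G m).edgeSet ∧ B'.ncard ≤ k ∧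
        ∀ H'' : (subdivGraph G m).Subgraph,
          IsSteinerTree (subdivGraph G m) (Sum.inl '' T) H'' → H''.edgeSet.ncard ≤ 2 * t →
            (H''.edgeSet ∩ B').Nonempty) :=
  steinerTree_interdiction_subdivision_general G T C k t m hm
end

section
/- Let Φ be a finite set of clauses over the variables Fin n, where a clause is a finite set of literals (i, s) ∈ Fin n × Bool. Define the formula Φ' over the variable type Fin n × Bool consisting of: for each clause c ∈ Φ, the clause c' = {((i, s), true) : (i, s) ∈ c}; and, for each i : Fin n, the two clauses {((i, true), true), ((i, false), true)} and {((i, true), false), ((i, false), false)}. Then an assignment β : Fin n × Bool → Bool satisfies Φ' if and only if there exists an assignment α : Fin n → Bool satisfying Φ such that β (i, s) = true ↔ α i = s, for all i and s. -/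
/-- An assignment satisfies a clause (a finite set of literals) if some literal of the clause
evaluates to its sign. -/
def SatisfiesClause {W : Type*} (α : W → Bool) (c : Finset (W × Bool)) : Prop :=
  ∃ l ∈ c, α l.1 = l.2

/-- An assignment satisfies a finite set of clauses if it satisfies every clause. -/
def Satisfies {W : Type*} (α : W → Bool) (Φ : Finset (Finset (W × Bool))) : Prop :=
  ∀ c ∈ Φ, SatisfiesClause α c

/-- The formula `Φ'` over the variable type `Fin n × Bool`: each clause of `Φ` is turned
into a clause of positive literals over the new variables, and for each variable `i` the two
clauses `{((i,true),true), ((i,false),true)}` and `{((i,true),false), ((i,false),false)}`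
are added. -/
def litDup {n : ℕ} (Φ : Finset (Finset (Fin n × Bool))) :
    Finset (Finset ((Fin n × Bool) × Bool)) :=
  Φ.image (fun c => c.image (fun l => (l, true))) ∪
    Finset.univ.image
      (fun i : Fin n => ({((i, true), true), ((i, false), true)} : Finset ((Fin n × Bool) × Bool))) ∪
    Finset.univ.image
      (fun i : Fin n => ({((i, true), false), ((i, false), false)} : Finset ((Fin n × Bool) × Bool)))

theorem sat_variable_positivization {n : ℕ} (Φ : Finset (Finset (Fin n × Bool)))
    (β : Fin n × Bool → Bool) :
    Satisfies β (litDup Φ) ↔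
      ∃ α : Fin n → Bool, Satisfies α Φ ∧
        ∀ (i : Fin n) (s : Bool), (β (i, s) = true ↔ α i = s) := by
  constructor
  · intro h
    have hB : ∀ i : Fin n, β (i, true) = true ∨ β (i, false) = true := by
      intro i
      have hm : ({((i, true), true), ((i, false), true)} :
          Finset ((Fin n × Bool) × Bool)) ∈ litDup Φ := by
        simp [litDup]
      obtain ⟨l, hl, hv⟩ := h _ hm
      simp only [Finset.mem_insert, Finset.mem_singleton] at hl
      rcases hl with rfl | rfl
      · left; simpa using hv
      · right; simpa using hv
    have hC : ∀ i : Fin n, β (i, true) = false ∨ β (i, false) = false := by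
      intro i
      have hm : ({((i, true), false), ((i, false), false)} :
          Finset ((Fin n × Bool) × Bool)) ∈ litDup Φ := by
        simp [litDup]
      obtain ⟨l, hl, hv⟩ := h _ hm
      simp only [Finset.mem_insert, Finset.mem_singleton] at hl
      rcases hl with rfl | rfl
      · left; simpa using hv
      · right; simpa using hv
    have hneg : ∀ i : Fin n, β (i, false) = !β (i, true) := by
      intro i
      rcases hB i with h1 | h1 <;> rcases hC i with h2 | h2 <;>
        simp_all
    refine ⟨fun i => β (i, true), ?_, ?_⟩
    · intro c hc
      have hm : c.image (fun l => (l, true)) ∈ litDup Φ := by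
        simp only [litDup, Finset.mem_union, Finset.mem_image]
        exact Or.inl (Or.inl ⟨c, hc, rfl⟩)
      obtain ⟨l, hl, hv⟩ := h _ hm
      simp only [Finset.mem_image] at hl
      obtain ⟨m, hm', rfl⟩ := hl
      refine ⟨m, hm', ?_⟩
      have hv' : β m = true := hv
      cases hb : m.2
      · have := hneg m.1
        have : β (m.1, false) = true := by
          have : m = (m.1, false) := by rw [← hb]
          rwa [this] at hv'
        simp [hneg m.1] at this
        simp [this]
      · have : m = (m.1, true) := by rw [← hb]
        rw [this] at hv'
        exact hv'
    · intro i s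
      cases s
      · simp [hneg i]
      · simp
  · rintro ⟨α, hα, hβ⟩
    intro c hc
    simp only [litDup, Finset.mem_union, Finset.mem_image] at hc
    rcases hc with (⟨d, hd, rfl⟩ | ⟨i, _, rfl⟩) | ⟨i, _, rfl⟩
    · obtain ⟨l, hl, hv⟩ := hα d hd
      refine ⟨(l, true), Finset.mem_image_of_mem _ hl, ?_⟩
      show β l = true
      have := (hβ l.1 l.2).mpr hv
      simpa using this
    · simp only [SatisfiesClause]
      cases hb : α i
      · exact ⟨((i, false), true), by simp, by simpa using (hβ i false).mpr hb⟩
      · exact ⟨((i, true), true), by simp, by simpa using (hβ i true).mpr hb⟩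
    · simp only [SatisfiesClause]
      cases hb : α i
      · refine ⟨((i, true), false), by simp, ?_⟩
        have := (hβ i true)
        simp [hb] at this
        simpa using this
      · refine ⟨((i, false), false), by simp, ?_⟩
        have := (hβ i false)
        simp [hb] at this
        simpa using this
end

section
/- Let C and D be finite types, let k ∈ ℕ, and let Φ be a finite set of clauses over the variable type V = C ⊕ D. Let V' = C ⊕ (D × Fin (k+1)), and for β : V' → Bool define π β : V → Bool by (π β)(inl c) = β (inl c) and (π β)(inr d) = true if and only if β (inr (d, j)) = true for some j : Fin (k+1). Then there exists a set B ⊆ C with |B| ≤ k such that every assignment α : V → Bool satisfying Φ has α (inl c) = true for some c ∈ B, if and only if there exists a set B' ⊆ V' with |B'| ≤ k such that every assignment β : V' → Bool for which π β satisfies Φ has β v' = true for some v' ∈ B'. -/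
/-- The projection of an assignment over `C ⊕ (D × Fin (k+1))` to an assignment over `C ⊕ D`:
a variable `inr d` is set to true iff some of its `k+1` copies is set to true. -/
def projAssign {C D : Type*} {k : ℕ} (β : C ⊕ (D × Fin (k + 1)) → Bool) : C ⊕ D → Bool
  | Sum.inl c => β (Sum.inl c)
  | Sum.inr d => decide (∃ j : Fin (k + 1), β (Sum.inr (d, j)) = true)

theorem sat_interdiction_duplication {C D : Type*} [Fintype C] [Fintype D]
    [DecidableEq C] [DecidableEq D] (k : ℕ) (Φ : Finset (Finset ((C ⊕ D) × Bool))) :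
    (∃ B : Finset C, B.card ≤ k ∧
        ∀ α : C ⊕ D → Bool, Satisfies α Φ → ∃ c ∈ B, α (Sum.inl c) = true) ↔
      (∃ B' : Finset (C ⊕ (D × Fin (k + 1))), B'.card ≤ k ∧
        ∀ β : C ⊕ (D × Fin (k + 1)) → Bool, Satisfies (projAssign β) Φ →
          ∃ v' ∈ B', β v' = true) := by
  constructor
  · rintro ⟨B, hBk, hB⟩
    refine ⟨B.image Sum.inl, le_trans Finset.card_image_le hBk, ?_⟩
    intro β hβ
    obtain ⟨c, hc, hct⟩ := hB (projAssign β) hβ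
    exact ⟨Sum.inl c, Finset.mem_image_of_mem _ hc, hct⟩
  · rintro ⟨B', hBk, hB⟩
    refine ⟨Finset.univ.filter (fun c => Sum.inl c ∈ B'), ?_, ?_⟩
    · calc (Finset.univ.filter (fun c => Sum.inl c ∈ B')).card
          ≤ B'.card := by
            apply Finset.card_le_card_of_injOn (fun c => Sum.inl c)
            · intro c hc; exact (Finset.mem_filter.mp hc).2
            · intro a _ b _ h; exact Sum.inl.inj h
        _ ≤ k := hBk
    · intro α hα
      -- for each d, there is a copy index not in B'
      have hfree : ∀ d : D, ∃ j : Fin (k + 1), Sum.inr (d, j) ∉ B' := by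
        intro d
        by_contra h
        push_neg at h
        have : (Finset.univ : Finset (Fin (k + 1))).card ≤ B'.card := by
          apply Finset.card_le_card_of_injOn (fun j => Sum.inr (d, j))
          · intro j _; exact h j
          · intro a _ b _ hab
            exact (Prod.mk.injEq .. ▸ Sum.inr.inj hab).2
        simp [Finset.card_univ] at this
        omega
      choose f hf using hfree
      set β : C ⊕ (D × Fin (k + 1)) → Bool := fun v =>
        match v with
        | Sum.inl c => α (Sum.inl c)
        | Sum.inr (d, j) => if j = f d then α (Sum.inr d) else false with hβdef
      have hproj : projAssign β = α := by
        funext v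
        cases v with
        | inl c => rfl
        | inr d =>
          simp only [projAssign, hβdef]
          rcases Bool.eq_false_or_eq_true (α (Sum.inr d)) with h | h <;> simp only [h] <;> simp
      obtain ⟨v', hv', hvt⟩ := hB β (by rw [hproj]; exact hα)
      cases v' with
      | inl c =>
        exact ⟨c, Finset.mem_filter.mpr ⟨Finset.mem_univ _, hv'⟩, hvt⟩
      | inr p =>
        obtain ⟨d, j⟩ := p
        exfalso
        simp only [hβdef] at hvt
        by_cases hj : j = f d
        · subst hj; exact hf d hv'
        · simp [hj] at hvt
end
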